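/- Consider three agents with symmetric complementarity matrix G having zero diagonal, G₁₂ = 1, and 1 ≥ G₁₃ ≥ G₂₃ > 0, and suppose G₁₃ + G₂₃ ≠ 1. Consider the problem: maximize c over σ ∈ ℝ³ with σ_i ≥ 0 and σ₁ + σ₂ + σ₃ = 1, subject to (G·σ)_i = c for every i with σ_i > 0. Then: (i) this problem has a unique maximizer σ*; (ii) all three agents are active (σ*_i > 0 for all i) if and only if G₁₃ + G₂₃ > 1, in which case σ*₁ = c·(1 + G₁₃ − G₂₃)/(2G₁₃), σ*₂ = c·(1 + G₂₃ − G₁₃)/(2G₂₃), σ*₃ = c·(G₁₃ + G₂₃ − 1)/(2G₁₃G₂₃) with c = 2G₁₃G₂₃/(2(G₁₃ + G₂₃) − 1 − (G₁₃ − G₂₃)²) > 1/2, while if G₁₃ + G₂₃ < 1 the unique maximizer is σ* = (1/2, 1/2, 0) with c = 1/2; (iii) in all cases σ*₁ ≥ σ*₂ ≥ σ*₃. -/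

import Mathlib

open Matrix

/-!
An allocation balanced at level `c` is pinned down by its support. On the full support the
three balance equations together with `∑ σᵢ = 1` have a unique solution, of level
`c = 2 g₁₃ g₂₃ / D` with `D = 2 (g₁₃ + g₂₃) - 1 - (g₁₃ - g₂₃)²`; its shares are positive exactly
when `g₁₃ + g₂₃ > 1`, and then `c > 1/2`. On a proper support the level is `1/2` (support
`{1, 2}`, allocation `(1/2, 1/2, 0)`), `g₁₃ / 2`, `g₂₃ / 2` or `0`, so at most `1/2`, with `1/2`
attained only by `(1/2, 1/2, 0)` when `g₁₃ < 1`. Comparing levels identifies the unique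
maximizer in each regime. Agents `1, 2, 3` are the indices `0, 1, 2`.
-/

section General

variable {n : Type*} [Fintype n]

def IsBalancedAllocation (G : Matrix n n ℝ) (σ : n → ℝ) (c : ℝ) : Prop :=
  (∀ i, 0 ≤ σ i) ∧ ∑ i, σ i = 1 ∧ ∀ i, 0 < σ i → G.mulVec σ i = c

def IsOptimalAllocation (G : Matrix n n ℝ) (σ : n → ℝ) : Prop :=
  ∃ c, IsBalancedAllocation G σ c ∧ ∀ σ' c', IsBalancedAllocation G σ' c' → c' ≤ c

theorem isOptimalAllocation_iff_eq {G : Matrix n n ℝ} {σ₀ : n → ℝ} {c₀ : ℝ}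
    (h₀ : IsBalancedAllocation G σ₀ c₀)
    (hle : ∀ σ c, IsBalancedAllocation G σ c → c ≤ c₀)
    (hrigid : ∀ σ c, IsBalancedAllocation G σ c → c₀ ≤ c → σ = σ₀) (σ : n → ℝ) :
    IsOptimalAllocation G σ ↔ σ = σ₀ := by
  constructor
  · rintro ⟨c, hσ, hmax⟩
    exact hrigid σ c hσ (hmax σ₀ c₀ h₀)
  · rintro rfl
    exact ⟨c₀, h₀, hle⟩

end General

def threeAgentMatrix (g13 g23 : ℝ) : Matrix (Fin 3) (Fin 3) ℝ :=
  !![0, 1, g13; 1, 0, g23; g13, g23, 0]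

noncomputable def balanceConstant (g13 g23 : ℝ) : ℝ :=
  2 * g13 * g23 / (2 * (g13 + g23) - 1 - (g13 - g23) ^ 2)

noncomputable def interiorAllocation (g13 g23 : ℝ) : Fin 3 → ℝ :=
  ![balanceConstant g13 g23 * (1 + g13 - g23) / (2 * g13),
    balanceConstant g13 g23 * (1 + g23 - g13) / (2 * g23),
    balanceConstant g13 g23 * (g13 + g23 - 1) / (2 * g13 * g23)]

section ThreeAgents

variable {g13 g23 c : ℝ} {σ : Fin 3 → ℝ}

theorem isBalancedAllocation_threeAgentMatrix_iff :
    IsBalancedAllocation (threeAgentMatrix g13 g23) σ c ↔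
      0 ≤ σ 0 ∧ 0 ≤ σ 1 ∧ 0 ≤ σ 2 ∧ σ 0 + σ 1 + σ 2 = 1 ∧
      (0 < σ 0 → σ 1 + g13 * σ 2 = c) ∧ (0 < σ 1 → σ 0 + g23 * σ 2 = c) ∧
      (0 < σ 2 → g13 * σ 0 + g23 * σ 1 = c) := by
  simp [IsBalancedAllocation, threeAgentMatrix, Fin.forall_fin_succ, Fin.sum_univ_three,
    Matrix.mulVec, dotProduct, and_assoc]

theorem eq_halves_or_le_of_not_forall_pos (h2 : g23 ≤ g13) (h3 : 0 ≤ g23)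
    (hσ : IsBalancedAllocation (threeAgentMatrix g13 g23) σ c) (hzero : ¬ ∀ i, 0 < σ i) :
    (σ = ![1/2, 1/2, 0] ∧ c = 1/2) ∨ c ≤ g13 / 2 := by
  obtain ⟨hσ0, hσ1, hσ2, hs, e0, e1, e2⟩ := isBalancedAllocation_threeAgentMatrix_iff.1 hσ
  have hg13 : 0 ≤ g13 := h3.trans h2
  rcases hσ2.eq_or_lt with hd | hd
  · rcases hσ0.eq_or_lt with ha | ha
    · have := e1 (by linarith)
      right; nlinarith
    rcases hσ1.eq_or_lt with hb | hb
    · have := e0 ha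
      right; nlinarith
    have E0 := e0 ha
    have E1 := e1 hb
    rw [← hd, mul_zero, add_zero] at E0 E1
    refine Or.inl ⟨funext fun i => ?_, by linarith⟩
    fin_cases i <;> simp <;> linarith
  · rcases hσ0.eq_or_lt with ha | ha
    · rcases hσ1.eq_or_lt with hb | hb
      · have := e2 hd
        right; nlinarith
      have E1 := e1 hb
      have E2 := e2 hd
      right; nlinarith
    rcases hσ1.eq_or_lt with hb | hb
    · have E0 := e0 ha
      have E2 := e2 hd
      right; nlinarith
    exact absurd (fun i => by fin_cases i <;> assumption) hzero

theorem shares_mul_eq_of_forall_pos (hσ : IsBalancedAllocation (threeAgentMatrix g13 g23) σ c)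
    (hpos : ∀ i, 0 < σ i) :
    σ 0 * (2 * g13) = c * (1 + g13 - g23) ∧ σ 1 * (2 * g23) = c * (1 + g23 - g13) ∧
      σ 2 * (2 * g13 * g23) = c * (g13 + g23 - 1) := by
  obtain ⟨-, -, -, -, e0, e1, e2⟩ := isBalancedAllocation_threeAgentMatrix_iff.1 hσ
  have E0 := e0 (hpos 0)
  have E1 := e1 (hpos 1)
  have E2 := e2 (hpos 2)
  exact ⟨by linear_combination g13 * E1 - g23 * E0 + E2,
    by linear_combination g23 * E0 - g13 * E1 + E2,
    by linear_combination g23 * E0 + g13 * E1 - E2⟩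

theorem one_lt_add_of_forall_pos (hg13 : 0 < g13) (hg23 : 0 < g23)
    (hσ : IsBalancedAllocation (threeAgentMatrix g13 g23) σ c) (hpos : ∀ i, 0 < σ i) :
    1 < g13 + g23 := by
  obtain ⟨-, -, -, -, e0, -, -⟩ := isBalancedAllocation_threeAgentMatrix_iff.1 hσ
  have hc : 0 < c := by rw [← e0 (hpos 0)]; nlinarith [hpos 1, hpos 2]
  have hshare := (shares_mul_eq_of_forall_pos hσ hpos).2.2
  nlinarith [mul_pos (mul_pos (hpos 2) hg13) hg23]

theorem balanceConstant_denom_pos (h1 : g13 ≤ 1) (h2 : g23 ≤ g13) (h3 : 0 ≤ g23)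
    (hgt : 1 < g13 + g23) : 0 < 2 * (g13 + g23) - 1 - (g13 - g23) ^ 2 := by
  nlinarith

-- `4 g₁₃ g₂₃ - D = (g₁₃ + g₂₃ - 1)²` for the denominator `D`.
theorem one_half_lt_balanceConstant (h1 : g13 ≤ 1) (h2 : g23 ≤ g13) (h3 : 0 ≤ g23)
    (hgt : 1 < g13 + g23) : 1 / 2 < balanceConstant g13 g23 := by
  rw [balanceConstant, lt_div_iff₀ (balanceConstant_denom_pos h1 h2 h3 hgt)]
  nlinarith [mul_pos (sub_pos.2 hgt) (sub_pos.2 hgt)]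

theorem interiorAllocation_pos (h1 : g13 ≤ 1) (h2 : g23 ≤ g13) (h3 : 0 < g23)
    (hgt : 1 < g13 + g23) (i : Fin 3) : 0 < interiorAllocation g13 g23 i := by
  have hC := (one_half_lt_balanceConstant h1 h2 h3.le hgt).trans' one_half_pos
  have hg13 := h3.trans_le h2
  fin_cases i <;> refine div_pos (mul_pos hC ?_) (by positivity) <;> linarith

theorem isBalancedAllocation_interiorAllocation (h1 : g13 ≤ 1) (h2 : g23 ≤ g13) (h3 : 0 < g23)
    (hgt : 1 < g13 + g23) :
    IsBalancedAllocation (threeAgentMatrix g13 g23) (interiorAllocation g13 g23)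
      (balanceConstant g13 g23) := by
  have hD := (balanceConstant_denom_pos h1 h2 h3.le hgt).ne'
  have hg13 := (h3.trans_le h2).ne'
  refine isBalancedAllocation_threeAgentMatrix_iff.2 ⟨(interiorAllocation_pos h1 h2 h3 hgt 0).le,
    (interiorAllocation_pos h1 h2 h3 hgt 1).le, (interiorAllocation_pos h1 h2 h3 hgt 2).le,
    ?_, fun _ => ?_, fun _ => ?_, fun _ => ?_⟩ <;>
  · simp only [interiorAllocation, balanceConstant, cons_val_zero, cons_val_one, cons_val]
    field_simp
    ring

theorem eq_interiorAllocation_of_forall_pos (h1 : g13 ≤ 1) (h2 : g23 ≤ g13) (h3 : 0 < g23)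
    (hgt : 1 < g13 + g23) (hσ : IsBalancedAllocation (threeAgentMatrix g13 g23) σ c)
    (hpos : ∀ i, 0 < σ i) :
    c = balanceConstant g13 g23 ∧ σ = interiorAllocation g13 g23 := by
  have hD := (balanceConstant_denom_pos h1 h2 h3.le hgt).ne'
  have hg13 := h3.trans_le h2
  obtain ⟨-, -, -, hs, -⟩ := isBalancedAllocation_threeAgentMatrix_iff.1 hσ
  obtain ⟨s0, s1, s2⟩ := shares_mul_eq_of_forall_pos hσ hpos
  have hc : c = balanceConstant g13 g23 := by
    rw [balanceConstant, eq_div_iff hD]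
    linear_combination 2 * g13 * g23 * hs - g23 * s0 - g13 * s1 - s2
  subst hc
  refine ⟨rfl, funext fun i => ?_⟩
  fin_cases i <;> refine (eq_div_iff (by positivity)).2 ?_ <;> assumption

theorem interiorAllocation_antitone (h1 : g13 ≤ 1) (h2 : g23 ≤ g13) (h3 : 0 < g23)
    (hgt : 1 < g13 + g23) :
    interiorAllocation g13 g23 1 ≤ interiorAllocation g13 g23 0 ∧
      interiorAllocation g13 g23 2 ≤ interiorAllocation g13 g23 1 := by
  have hC := (one_half_lt_balanceConstant h1 h2 h3.le hgt).trans' one_half_pos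
  have hg13 := h3.trans_le h2
  simp only [interiorAllocation, cons_val_zero, cons_val_one, cons_val_two, head_cons,
    tail_cons]
  constructor
  · rw [div_le_div_iff₀ (by positivity) (by positivity)]
    nlinarith [mul_nonneg (mul_nonneg hC.le (sub_nonneg.2 h2)) (sub_pos.2 hgt).le]
  · rw [div_le_div_iff₀ (by positivity) (by positivity)]
    nlinarith [mul_nonneg (mul_nonneg (mul_nonneg hC.le (sub_nonneg.2 h1))
      (by linarith : (0:ℝ) ≤ 1 + g13 - g23)) h3.le]

theorem isOptimalAllocation_threeAgentMatrix_iff_of_add_lt_one (h2 : g23 ≤ g13)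
    (h3 : 0 < g23) (hlt : g13 + g23 < 1) (σ : Fin 3 → ℝ) :
    IsOptimalAllocation (threeAgentMatrix g13 g23) σ ↔ σ = ![1/2, 1/2, 0] := by
  have hboundary : ∀ σ c, IsBalancedAllocation (threeAgentMatrix g13 g23) σ c →
      ¬ ∀ i, 0 < σ i := fun σ c hσ hpos =>
    hlt.not_gt (one_lt_add_of_forall_pos (h3.trans_le h2) h3 hσ hpos)
  have hhalf : IsBalancedAllocation (threeAgentMatrix g13 g23) ![1/2, 1/2, 0] (1/2) :=
    isBalancedAllocation_threeAgentMatrix_iff.2 (by norm_num [cons_val_two])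
  refine isOptimalAllocation_iff_eq hhalf (fun σ c hσ => ?_) (fun σ c hσ hc => ?_) σ
  · rcases eq_halves_or_le_of_not_forall_pos h2 h3.le hσ (hboundary σ c hσ) with
      ⟨-, rfl⟩ | hc <;> linarith
  · rcases eq_halves_or_le_of_not_forall_pos h2 h3.le hσ (hboundary σ c hσ) with
      ⟨rfl, -⟩ | hc'
    · rfl
    · linarith

theorem isOptimalAllocation_threeAgentMatrix_iff_of_one_lt_add (h1 : g13 ≤ 1)
    (h2 : g23 ≤ g13) (h3 : 0 < g23) (hgt : 1 < g13 + g23) (σ : Fin 3 → ℝ) :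
    IsOptimalAllocation (threeAgentMatrix g13 g23) σ ↔ σ = interiorAllocation g13 g23 := by
  have hC := one_half_lt_balanceConstant h1 h2 h3.le hgt
  have hboundary : ∀ σ c, IsBalancedAllocation (threeAgentMatrix g13 g23) σ c →
      (¬ ∀ i, 0 < σ i) → c ≤ 1 / 2 := fun σ c hσ hpos => by
    rcases eq_halves_or_le_of_not_forall_pos h2 h3.le hσ hpos with ⟨-, rfl⟩ | hc <;> linarith
  refine isOptimalAllocation_iff_eq (isBalancedAllocation_interiorAllocation h1 h2 h3 hgt)
    (fun σ c hσ => ?_) (fun σ c hσ hc => ?_) σ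
  all_goals by_cases hpos : ∀ i, 0 < σ i
  · exact (eq_interiorAllocation_of_forall_pos h1 h2 h3 hgt hσ hpos).1.le
  · linarith [hboundary σ c hσ hpos]
  · exact (eq_interiorAllocation_of_forall_pos h1 h2 h3 hgt hσ hpos).2
  · linarith [hboundary σ c hσ hpos]

end ThreeAgents

theorem statement_13 (g13 g23 : ℝ)
    (h1 : g13 ≤ 1) (h2 : g23 ≤ g13) (h3 : 0 < g23) (hne : g13 + g23 ≠ 1)
    (G : Matrix (Fin 3) (Fin 3) ℝ)
    (hG : G = !![0, 1, g13; 1, 0, g23; g13, g23, 0])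
    (IsOpt : (Fin 3 → ℝ) → Prop)
    (hIsOpt : ∀ σ : Fin 3 → ℝ, IsOpt σ ↔
      ∃ c : ℝ, (∀ i, 0 ≤ σ i) ∧ (∑ i, σ i) = 1 ∧
        (∀ i, 0 < σ i → G.mulVec σ i = c) ∧
        (∀ (σ' : Fin 3 → ℝ) (c' : ℝ), (∀ i, 0 ≤ σ' i) → (∑ i, σ' i) = 1 →
          (∀ i, 0 < σ' i → G.mulVec σ' i = c') → c' ≤ c)) :
    (∃! σ : Fin 3 → ℝ, IsOpt σ) ∧
    ∀ σ : Fin 3 → ℝ, IsOpt σ →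
      ((∀ i, 0 < σ i) ↔ 1 < g13 + g23) ∧
      (1 < g13 + g23 →
        σ 0 = (2 * g13 * g23 / (2 * (g13 + g23) - 1 - (g13 - g23) ^ 2))
                * (1 + g13 - g23) / (2 * g13) ∧
        σ 1 = (2 * g13 * g23 / (2 * (g13 + g23) - 1 - (g13 - g23) ^ 2))
                * (1 + g23 - g13) / (2 * g23) ∧
        σ 2 = (2 * g13 * g23 / (2 * (g13 + g23) - 1 - (g13 - g23) ^ 2))
                * (g13 + g23 - 1) / (2 * g13 * g23) ∧
        (1 : ℝ) / 2 < 2 * g13 * g23 / (2 * (g13 + g23) - 1 - (g13 - g23) ^ 2)) ∧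
      (g13 + g23 < 1 → σ = ![1/2, 1/2, 0]) ∧
      (σ 1 ≤ σ 0 ∧ σ 2 ≤ σ 1) := by
  have hOpt : ∀ σ, IsOpt σ ↔ IsOptimalAllocation (threeAgentMatrix g13 g23) σ := by
    subst hG
    simpa only [IsOptimalAllocation, IsBalancedAllocation, threeAgentMatrix, and_imp, and_assoc]
      using hIsOpt
  rcases hne.lt_or_gt with hlt | hgt
  · have hσ σ := (hOpt σ).trans
      (isOptimalAllocation_threeAgentMatrix_iff_of_add_lt_one h2 h3 hlt σ)
    refine ⟨⟨_, (hσ _).2 rfl, fun σ => (hσ σ).1⟩, fun σ h => ?_⟩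
    obtain rfl := (hσ σ).1 h
    exact ⟨⟨fun hpos => absurd (hpos 2) (by simp), fun h => absurd h hlt.not_gt⟩,
      fun h => absurd h hlt.not_gt, fun _ => rfl, by norm_num [cons_val_two]⟩
  · have hσ σ := (hOpt σ).trans
      (isOptimalAllocation_threeAgentMatrix_iff_of_one_lt_add h1 h2 h3 hgt σ)
    refine ⟨⟨_, (hσ _).2 rfl, fun σ => (hσ σ).1⟩, fun σ h => ?_⟩
    obtain rfl := (hσ σ).1 h
    exact ⟨⟨fun _ => hgt, fun _ => interiorAllocation_pos h1 h2 h3 hgt⟩,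
      fun _ => ⟨rfl, rfl, rfl, one_half_lt_balanceConstant h1 h2 h3.le hgt⟩,
      fun h => absurd h hgt.not_gt, interiorAllocation_antitone h1 h2 h3 hgt⟩
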